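/- Let n = 2k and f : F_{2^n} → F_2 with f(x) = Tr^n_1(α x^{2^i}(x + x^{2^k})) for α ∈ F_{2^n} \ F_{2^k} and 0 ≤ i < n. Then f is bent. -/

import Mathlib

/-!
If the polar form `f (x + u) + f x + f u` of a Boolean function equals `tr (L u * x)` with
`L u ≠ 0` for `u ≠ 0`, then `W_f(β)² = |K|` for every `β`: after expanding the square, the sum
over `x` is the character sum `∑ₓ (-1)^tr(L u * x)`, which vanishes unless `u = 0`.

For `f x = tr (α x^{2^i} (x + x^{2^k}))`, moving the Frobenius powers off `x` inside the trace
gives `L u = (α s)^{2^{2k-i}} + w + w^{2^k}` with `s = u + u^{2^k}` and `w = α u^{2^i}`.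
If `L u = 0`, then `α s = (w + w^{2^k})^{2^i}` and `s` are both fixed by `x ↦ x^{2^k}` while `α`
is not, so `s = 0`; then `w` and `u^{2^i}` are fixed in the same way, which forces `u = 0`.
-/

open Finset

def chr (b : ZMod 2) : ℤ := if b = 0 then 1 else -1

variable {K : Type*} [Field K] [Fintype K] [Algebra (ZMod 2) K]

/-- The absolute trace `Tr^n_1 : F_{2^n} → F_2`. -/
noncomputable def tr (x : K) : ZMod 2 := Algebra.trace (ZMod 2) K x

/-- The Walsh transform of a Boolean function `f` on `K = F_{2^n}`. -/
noncomputable def walshF (f : K → ZMod 2) (l : K) : ℤ :=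
  ∑ x, chr (f x + tr (l * x))

/-- `f` is bent on `K = F_{2^{2k}}`: all Walsh values are `±2^k`. -/
def IsBentF (k : ℕ) (f : K → ZMod 2) : Prop :=
  ∀ l : K, walshF f l = 2 ^ k ∨ walshF f l = -(2 ^ k)

instance : CharP K 2 := charP_of_injective_algebraMap' (ZMod 2) 2

lemma chr_add : ∀ a b : ZMod 2, chr (a + b) = chr a * chr b := by decide

lemma chr_eq_one_iff : ∀ a : ZMod 2, chr a = 1 ↔ a = 0 := by decide

omit [Fintype K] in
lemma tr_add (x y : K) : tr (x + y) = tr x + tr y := map_add _ x y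

omit [Fintype K] in
lemma tr_zero : tr (0 : K) = 0 := map_zero _

lemma tr_pow_two_pow (j : ℕ) (x : K) : tr (x ^ 2 ^ j) = tr x := by
  have hfrob := FiniteField.coe_frobeniusAlgEquivOfAlgebraic_iterate (ZMod 2) K j
  rw [ZMod.card] at hfrob
  have h :=
    Algebra.trace_eq_of_algEquiv (FiniteField.frobeniusAlgEquivOfAlgebraic (ZMod 2) K ^ j) x
  rwa [AlgEquiv.coe_pow, hfrob] at h

omit [Algebra (ZMod 2) K] in
lemma pow_two_pow_eq_self {n : ℕ} (hcard : Fintype.card K = 2 ^ n) (x : K) : x ^ 2 ^ n = x :=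
  hcard ▸ FiniteField.pow_card x

lemma tr_mul_pow_two_pow {n j : ℕ} (hcard : Fintype.card K = 2 ^ n) (hj : j ≤ n) (c x : K) :
    tr (c * x ^ 2 ^ j) = tr (c ^ 2 ^ (n - j) * x) := by
  rw [← tr_pow_two_pow (n - j), mul_pow, ← pow_mul, ← pow_add, Nat.add_sub_cancel' hj,
    pow_two_pow_eq_self hcard]

noncomputable def trChar : AddChar K ℤ where
  toFun x := chr (tr x)
  map_zero_eq_one' := by rw [tr_zero]; rfl
  map_add_eq_mul' x y := by rw [tr_add, chr_add]

lemma trChar_isPrimitive : (trChar : AddChar K ℤ).IsPrimitive := by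
  intro a ha hψ
  refine ha ((traceForm_nondegenerate (ZMod 2) K).1 a fun x => ?_)
  simpa [trChar, tr, chr_eq_one_iff] using DFunLike.congr_fun hψ x

lemma sum_chr_tr_mul [DecidableEq K] (b : K) :
    ∑ x : K, chr (tr (x * b)) = if b = 0 then (Fintype.card K : ℤ) else 0 := by
  simpa [trChar] using AddChar.sum_mulShift b trChar_isPrimitive

lemma walshF_mul_self_eq_card (f : K → ZMod 2) (L : K → K)
    (hf : ∀ u x, f (x + u) = f x + f u + tr (L u * x)) (hL : ∀ u, L u = 0 ↔ u = 0) (β : K) :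
    walshF f β * walshF f β = Fintype.card K := by
  classical
  have hf0 : f 0 = 0 := by
    simpa [(hL 0).2 rfl, tr_zero] using hf 0 0
  have hpair : ∀ u x, chr (f x + tr (β * x)) * chr (f (x + u) + tr (β * (x + u)))
      = chr (f u + tr (β * u)) * chr (tr (x * L u)) := by
    intro u x
    rw [← chr_add, ← chr_add, hf, mul_add, tr_add, mul_comm x]
    congr 1
    grind
  calc walshF f β * walshF f β
      = ∑ x, ∑ u, chr (f x + tr (β * x)) * chr (f (x + u) + tr (β * (x + u))) := by
        rw [walshF, sum_mul_sum]
        exact sum_congr rfl fun x _ => (Fintype.sum_equiv (Equiv.addLeft x) _ _ fun u => rfl).symm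
    _ = ∑ u, ∑ x, chr (f x + tr (β * x)) * chr (f (x + u) + tr (β * (x + u))) := sum_comm
    _ = ∑ u, chr (f u + tr (β * u)) * ∑ x, chr (tr (x * L u)) := by
        simp_rw [hpair, mul_sum]
    _ = chr (f 0 + tr (β * 0)) * Fintype.card K := by
        simp only [sum_chr_tr_mul, hL, mul_ite, mul_zero, sum_ite_eq', mem_univ, if_true]
    _ = Fintype.card K := by
        rw [hf0, mul_zero, tr_zero, add_zero, chr, if_pos rfl, one_mul]

theorem isBentF_of_polarization {k : ℕ} (hcard : Fintype.card K = 2 ^ (2 * k))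
    (f : K → ZMod 2) (L : K → K) (hf : ∀ u x, f (x + u) = f x + f u + tr (L u * x))
    (hL : ∀ u, L u = 0 ↔ u = 0) : IsBentF k f := fun β =>
  mul_self_eq_mul_self_iff.mp <| by
    rw [walshF_mul_self_eq_card f L hf hL β, hcard]
    push_cast
    ring

omit [Fintype K] [Algebra (ZMod 2) K] in
lemma eq_zero_of_pow_eq_self_of_mul_pow_eq {q : ℕ} {α y : K} (hα : α ^ q ≠ α) (hy : y ^ q = y)
    (hαy : (α * y) ^ q = α * y) : y = 0 := by
  by_contra hy0
  rw [mul_pow, hy] at hαy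
  exact hα (mul_right_cancel₀ hy0 hαy)

variable (k i : ℕ) in
noncomputable def quadTr (α x : K) : ZMod 2 := tr (α * (x ^ 2 ^ i * (x + x ^ 2 ^ k)))

variable (k i : ℕ) in
def polarCoeff (α u : K) : K :=
  (α * (u + u ^ 2 ^ k)) ^ 2 ^ (2 * k - i) + α * u ^ 2 ^ i + (α * u ^ 2 ^ i) ^ 2 ^ k

section Polarization

variable {k i : ℕ} (hcard : Fintype.card K = 2 ^ (2 * k))
include hcard

omit [Algebra (ZMod 2) K] in
lemma pow_two_pow_pow_two_pow_eq_self (x : K) : (x ^ 2 ^ k) ^ 2 ^ k = x := by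
  rw [← pow_mul, ← pow_add, ← two_mul, pow_two_pow_eq_self hcard]

lemma add_pow_two_pow_pow_two_pow (y : K) : (y + y ^ 2 ^ k) ^ 2 ^ k = y + y ^ 2 ^ k := by
  rw [add_pow_char_pow, pow_two_pow_pow_two_pow_eq_self hcard, add_comm]

lemma quadTr_add (hi : i ≤ 2 * k) (α u x : K) :
    quadTr k i α (x + u) = quadTr k i α x + quadTr k i α u + tr (polarCoeff k i α u * x) := by
  have hexpand : α * ((x + u) ^ 2 ^ i * (x + u + (x + u) ^ 2 ^ k))
      = α * (x ^ 2 ^ i * (x + x ^ 2 ^ k)) + α * (u ^ 2 ^ i * (u + u ^ 2 ^ k))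
        + (α * (u + u ^ 2 ^ k) * x ^ 2 ^ i + α * u ^ 2 ^ i * x + α * u ^ 2 ^ i * x ^ 2 ^ k) := by
    rw [add_pow_char_pow, add_pow_char_pow]
    ring
  have hk : 2 * k - k = k := by omega
  rw [quadTr, quadTr, quadTr, hexpand, polarCoeff, tr_add, tr_add, tr_add, tr_add, add_mul,
    add_mul, tr_add, tr_add, tr_mul_pow_two_pow hcard hi,
    tr_mul_pow_two_pow hcard (by omega : k ≤ 2 * k), hk]

lemma polarCoeff_eq_zero_iff (hi : i ≤ 2 * k) {α : K} (hα : α ^ 2 ^ k ≠ α) (u : K) :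
    polarCoeff k i α u = 0 ↔ u = 0 := by
  refine ⟨fun h => ?_, by rintro rfl; simp [polarCoeff]⟩
  set w := α * u ^ 2 ^ i
  have hαs : α * (u + u ^ 2 ^ k) = (w + w ^ 2 ^ k) ^ 2 ^ i := by
    rw [polarCoeff, add_assoc, CharTwo.add_eq_zero] at h
    rw [← h, ← pow_mul, ← pow_add, Nat.sub_add_cancel hi, pow_two_pow_eq_self hcard]
  have hs : u + u ^ 2 ^ k = 0 := by
    refine eq_zero_of_pow_eq_self_of_mul_pow_eq hα (add_pow_two_pow_pow_two_pow hcard u) ?_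
    rw [hαs, pow_right_comm, add_pow_two_pow_pow_two_pow hcard]
  have hw : w = w ^ 2 ^ k := by
    rwa [hs, mul_zero, eq_comm, pow_eq_zero_iff (by positivity), CharTwo.add_eq_zero] at hαs
  have hu : u = u ^ 2 ^ k := CharTwo.add_eq_zero.mp hs
  refine pow_eq_zero_iff (n := 2 ^ i) (by positivity) |>.mp <|
    eq_zero_of_pow_eq_self_of_mul_pow_eq hα ?_ hw.symm
  rw [pow_right_comm, ← hu]

end Polarization

theorem stmt16_general (k i : ℕ) (hi : i < 2 * k)
    (hcard : Fintype.card K = 2 ^ (2 * k))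
    (α : K) (hα : α ^ (2 ^ k) ≠ α) :
    IsBentF k (fun x => tr (α * (x ^ (2 ^ i) * (x + x ^ (2 ^ k))))) :=
  isBentF_of_polarization hcard (quadTr k i α) (polarCoeff k i α)
    (fun u x => quadTr_add hcard hi.le α u x)
    (polarCoeff_eq_zero_iff hcard hi.le hα)

theorem stmt16 (k i : ℕ) (hk : 0 < k) (hi : i < 2 * k)
    (hcard : Fintype.card K = 2 ^ (2 * k))
    (α : K) (hα : α ^ (2 ^ k) ≠ α) :
    IsBentF k (fun x => tr (α * (x ^ (2 ^ i) * (x + x ^ (2 ^ k))))) :=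
  stmt16_general k i hi hcard α hα
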